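/- arXiv:1605.06643 — 4 statements merged into one kernel-verified Lean document; each statement's English description precedes it below -/
import Mathlib

section
/- Let α ∈ (0,1) be a fixed constant. Consider a sequence of graphs G = G^(n), where G^(n) is a d(n)-regular simple graph on n vertices with d(n) → ∞ and λ(G^(n))/d(n) → 0 as n → ∞, and let G_p be the random subgraph of G^(n) with edge probability p = α/d(n). Then there exists a constant C = C(α) > 0 such that with high probability (probability tending to 1 as n → ∞) every connected component of G_p has at most C·log n vertices. -/
open MeasureTheory Filter

/-- Bernoulli measure on `Bool` with success probability `p`. -/
noncomputable def bernoulliMeasure (p : ℝ) : MeasureTheory.Measure Bool :=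
  ENNReal.ofReal p • MeasureTheory.Measure.dirac true +
    ENNReal.ofReal (1 - p) • MeasureTheory.Measure.dirac false

/-- Product measure: each potential edge (element of `Sym2 (Fin n)`) is retained
independently with probability `p`. -/
noncomputable def percolationMeasure (n : ℕ) (p : ℝ) :
    MeasureTheory.Measure (Sym2 (Fin n) → Bool) :=
  MeasureTheory.Measure.pi fun _ => bernoulliMeasure p

/-- The random subgraph `G_p`: the spanning subgraph of `G` whose edges are the
edges of `G` retained by `ω`. -/
def percolatedGraph {n : ℕ} (G : SimpleGraph (Fin n)) (ω : Sym2 (Fin n) → Bool) :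
    SimpleGraph (Fin n) where
  Adj u v := G.Adj u v ∧ ω s(u, v) = true
  symm := ⟨fun u v h => ⟨h.1.symm, by rw [Sym2.eq_swap]; exact h.2⟩⟩
  loopless := ⟨fun v h => G.loopless.irrefl v h.1⟩

/-- `G` is `d`-regular: every vertex has exactly `d` neighbours. -/
def regularOfDegree {n : ℕ} (G : SimpleGraph (Fin n)) (d : ℕ) : Prop :=
  ∀ v, Nat.card (G.neighborSet v) = d

/-- `λ(G)`: the maximum absolute value of the eigenvalues of the adjacency matrix of
the `d`-regular graph `G` other than the largest one `λ₁ = d` (one copy of the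
eigenvalue `d` is removed from the multiset of roots of the characteristic
polynomial). -/
noncomputable def secondEigenvalue {n : ℕ} (G : SimpleGraph (Fin n)) (d : ℕ) : ℝ :=
  letI : DecidableEq ℝ := Classical.decEq ℝ
  letI : DecidableRel G.Adj := fun _ _ => Classical.dec _
  NNReal.toReal ((((SimpleGraph.adjMatrix ℝ G).charpoly.roots.erase ((d : ℝ))).map
    (fun x => Real.toNNReal |x|)).sup)

/-- Number of vertices of the connected component `c`. -/
noncomputable def componentOrder {n : ℕ} (H : SimpleGraph (Fin n))
    (c : H.ConnectedComponent) : ℕ := Nat.card c.supp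

/-- Number of edges of the connected component `c`. -/
noncomputable def componentEdges {n : ℕ} (H : SimpleGraph (Fin n))
    (c : H.ConnectedComponent) : ℕ := Nat.card (H.induce c.supp).edgeSet

/-- The connected component `c` is a tree. -/
def componentIsTree {n : ℕ} (H : SimpleGraph (Fin n)) (c : H.ConnectedComponent) : Prop :=
  (H.induce c.supp).IsTree

/-- `C_k`: the number of vertices lying in connected components with exactly `k` vertices. -/
noncomputable def verticesInComponentsOfSize {n : ℕ} (H : SimpleGraph (Fin n)) (k : ℕ) : ℕ :=
  Nat.card {v : Fin n | componentOrder H (H.connectedComponentMk v) = k}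

/-- `T_k`: the number of vertices lying in connected components that are trees with
exactly `k` vertices. -/
noncomputable def verticesInTreeComponentsOfSize {n : ℕ} (H : SimpleGraph (Fin n)) (k : ℕ) : ℕ :=
  Nat.card {v : Fin n | componentOrder H (H.connectedComponentMk v) = k ∧
    componentIsTree H (H.connectedComponentMk v)}

/-- `t_k`: the number of subtrees of `G` with exactly `k` vertices. -/
noncomputable def subtreeCount {n : ℕ} (G : SimpleGraph (Fin n)) (k : ℕ) : ℕ :=
  Nat.card {H : G.Subgraph // H.coe.IsTree ∧ Nat.card H.verts = k}

/-- `N_k`: the number of connected components that are trees with exactly `k` vertices. -/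
noncomputable def treeComponentCount {n : ℕ} (H : SimpleGraph (Fin n)) (k : ℕ) : ℕ :=
  Nat.card {c : H.ConnectedComponent // componentOrder H c = k ∧ componentIsTree H c}


/-!
Explore the cluster of a finite set `R` of roots inside a window `W` one root at a time: the
open edges from a root `u` to the rest of the window are independent of the edges inside
`W \ {u}`, and they turn `u` into a cluster vertex and its open neighbours into new roots.
Charging `θ = α⁻¹` for a root and `γ = α e^{1-α}` for a cluster vertex, the induction closes
because a vertex of degree at most `d` has open-neighbour generating function
`(1 - p + pθ)^d ≤ e^{pd(θ-1)} ≤ e^{1-α} = θγ` when `pd ≤ α`. Hence a given vertex lies in a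
component with at least `m` vertices with probability at most `θγ^m`, and since `γ < 1`, a union
bound over the `n` vertices with `m ≥ 2 log n / log(1/γ)` leaves a failure probability of at
most `θ / n`.
-/

namespace MeasureTheory.Measure

variable {ι Ω : Type*} [Fintype ι] [DecidableEq ι] [MeasurableSpace Ω] {μ : ι → Measure Ω}
  [∀ i, IsProbabilityMeasure (μ i)]

lemma pi_inter_eq_mul_of_dependsOn [Countable Ω] [MeasurableSingletonClass Ω]
    (A : Finset ι) {E F : Set (ι → Ω)} (hE : DependsOn (· ∈ E) A)
    (hF : DependsOn (· ∈ F) (↑A)ᶜ) :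
    Measure.pi μ (E ∩ F) = Measure.pi μ E * Measure.pi μ F := by
  have hindep := (ProbabilityTheory.iIndepFun_pi (μ := μ) (X := fun _ => id) fun _ => aemeasurable_id)
    |>.indepFun_finset A Aᶜ disjoint_compl_right fun i => measurable_pi_apply i
  have preimage_image : ∀ (S : Finset ι) (E : Set (ι → Ω)), DependsOn (· ∈ E) S →
      (fun ω (i : S) => ω i) ⁻¹' ((fun ω (i : S) => ω i) '' E) = E := by
    refine fun S E hE => Set.Subset.antisymm ?_ (Set.subset_preimage_image _ _)
    rintro ω ⟨ω', hω', heq⟩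
    exact (hE fun i hi => congrFun heq ⟨i, hi⟩).mp hω'
  rw [← preimage_image A E hE, ← preimage_image Aᶜ F (by rwa [Finset.coe_compl])]
  exact hindep.measure_inter_preimage_eq_mul _ _ .of_discrete .of_discrete

lemma pi_forall_mem_eq (s : Finset ι) (b : ι → Ω) :
    Measure.pi μ {ω | ∀ i ∈ s, ω i = b i} = ∏ i ∈ s, μ i {b i} := by
  have : {ω | ∀ i ∈ s, ω i = b i} = Set.univ.pi fun i => if i ∈ s then {b i} else Set.univ := by
    ext ω
    simp only [Set.mem_ofPred_eq, Set.mem_pi, Set.mem_univ, true_implies]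
    exact forall_congr' fun i => by split_ifs <;> simp [*]
  rw [this, pi_pi]
  simp [apply_ite, Finset.prod_ite_mem]

end MeasureTheory.Measure

lemma Bool.measure_true_add_false (ν : Measure Bool) [IsProbabilityMeasure ν] :
    ν {true} + ν {false} = 1 := by
  rw [← measure_union (by simp) (measurableSet_singleton _), ← measure_univ (μ := ν)]
  congr
  ext b
  cases b <;> simp

def openPattern {ι : Type*} [DecidableEq ι] (A M : Finset ι) : Set (ι → Bool) :=
  {ω | ∀ i ∈ A, ω i = decide (i ∈ M)}

lemma pi_openPattern_inter {ι : Type*} [Fintype ι] [DecidableEq ι] (ν : Measure Bool)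
    [IsProbabilityMeasure ν] {A M : Finset ι} (hMA : M ⊆ A) {E : Set (ι → Bool)}
    (hE : DependsOn (· ∈ E) (↑A)ᶜ) :
    Measure.pi (fun _ => ν) (openPattern A M ∩ E)
      = ν {true} ^ M.card * ν {false} ^ (A.card - M.card) * Measure.pi (fun _ => ν) E := by
  have hpattern : DependsOn (· ∈ openPattern A M) A :=
    fun ω ω' h => propext (forall₂_congr fun i hi => by rw [h i hi])
  have hsplit : ∀ i, ν {decide (i ∈ M)} = if i ∈ M then ν {true} else ν {false} := fun i => by
    split_ifs <;> simp [*]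
  rw [Measure.pi_inter_eq_mul_of_dependsOn A hpattern hE, openPattern, Measure.pi_forall_mem_eq,
    ← Finset.card_sdiff_of_subset hMA]
  simp only [hsplit, Finset.prod_ite, Finset.prod_const, Finset.filter_mem_eq_inter,
    Finset.inter_eq_right.2 hMA, Finset.filter_notMem_eq_sdiff]

lemma Finset.sum_powerset_pow_mul_pow_mul_pow {ι R : Type*} [CommSemiring R] (a b c : R)
    (s : Finset ι) :
    ∑ t ∈ s.powerset, a ^ t.card * b ^ (s.card - t.card) * c ^ t.card = (a * c + b) ^ s.card := by
  simp_rw [mul_right_comm _ _ (c ^ _), ← mul_pow]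
  exact Finset.sum_pow_mul_eq_add_pow _ _ s

lemma Sym2.mk_notMem_image_mk_of_ne {V : Type*} [DecidableEq V] {u x y : V} (hx : x ≠ u)
    (hy : y ≠ u) (S : Finset V) : s(x, y) ∉ S.image (fun z => s(u, z)) := by
  simp only [Finset.mem_image, not_exists, not_and]
  intro z _ h
  have hu : u ∈ s(x, y) := h ▸ Sym2.mem_mk_left u z
  rcases Sym2.mem_iff.1 hu with rfl | rfl <;> simp_all

namespace SimpleGraph

variable {V : Type*} (H : SimpleGraph V)

def clusterIn (W R : Finset V) : Set V :=
  {x | ∃ r ∈ R, Relation.ReflTransGen (fun a b => H.Adj a b ∧ a ∈ W ∧ b ∈ W) r x}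

variable {H}

lemma subset_clusterIn (W R : Finset V) : ↑R ⊆ H.clusterIn W R :=
  fun r hr => ⟨r, hr, .refl⟩

lemma clusterIn_subset {W R : Finset V} (hRW : R ⊆ W) : H.clusterIn W R ⊆ W := by
  rintro x ⟨r, hr, hrx⟩
  induction hrx with
  | refl => exact hRW hr
  | tail _ hyx => exact hyx.2.2

lemma clusterIn_mono {W W' R R' : Finset V} (hW : W ⊆ W') (hR : R ⊆ R') :
    H.clusterIn W R ⊆ H.clusterIn W' R' := by
  rintro x ⟨r, hr, hrx⟩
  exact ⟨r, hR hr, Relation.ReflTransGen.mono (fun a b h => ⟨h.1, hW h.2.1, hW h.2.2⟩) _ _ hrx⟩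

lemma clusterIn_subset_of_subset_clusterIn {W R R' : Finset V} (h : ↑R' ⊆ H.clusterIn W R) :
    H.clusterIn W R' ⊆ H.clusterIn W R := by
  rintro x ⟨r', hr', hr'x⟩
  obtain ⟨r, hr, hrr'⟩ := h hr'
  exact ⟨r, hr, hrr'.trans hr'x⟩

lemma clusterIn_congr {H' : SimpleGraph V} {W : Finset V}
    (h : ∀ x ∈ W, ∀ y ∈ W, H.Adj x y ↔ H'.Adj x y) (R : Finset V) :
    H.clusterIn W R = H'.clusterIn W R := by
  have : (fun a b => H.Adj a b ∧ a ∈ W ∧ b ∈ W) = fun a b => H'.Adj a b ∧ a ∈ W ∧ b ∈ W := by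
    ext a b
    exact ⟨fun ⟨hab, ha, hb⟩ => ⟨(h a ha b hb).1 hab, ha, hb⟩,
      fun ⟨hab, ha, hb⟩ => ⟨(h a ha b hb).2 hab, ha, hb⟩⟩
  simp only [clusterIn, this]

lemma clusterIn_eq_insert [DecidableEq V] [DecidableRel H.Adj] {W R : Finset V} {u : V}
    (hu : u ∈ R) (hRW : R ⊆ W) :
    H.clusterIn W R =
      insert u (H.clusterIn (W.erase u) (R.erase u ∪ (W.erase u).filter (H.Adj u))) := by
  set R' := R.erase u ∪ (W.erase u).filter (H.Adj u)
  have hR'W : R' ⊆ W.erase u :=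
    Finset.union_subset (Finset.erase_subset_erase u hRW) (Finset.filter_subset _ _)
  refine Set.Subset.antisymm ?_ (Set.insert_subset (subset_clusterIn W R hu) ?_)
  · rintro x ⟨r, hr, hrx⟩
    induction hrx with
    | refl =>
      rcases eq_or_ne r u with rfl | hru
      · exact Set.mem_insert _ _
      · exact Or.inr (subset_clusterIn _ _
          (Finset.mem_union_left _ (Finset.mem_erase.2 ⟨hru, hr⟩)))
    | @tail y x _ hyx ih =>
      rcases eq_or_ne x u with rfl | hxu
      · exact Set.mem_insert _ _
      have hxW : x ∈ W.erase u := Finset.mem_erase.2 ⟨hxu, hyx.2.2⟩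
      refine Or.inr ?_
      rcases ih with rfl | ⟨r', hr', hr'y⟩
      · exact subset_clusterIn _ _ (Finset.mem_union_right _ (Finset.mem_filter.2 ⟨hxW, hyx.1⟩))
      · have hyW : y ∈ W.erase u := clusterIn_subset hR'W ⟨r', hr', hr'y⟩
        exact ⟨r', hr', hr'y.tail ⟨hyx.1, hyW, hxW⟩⟩
  · refine (clusterIn_mono (Finset.erase_subset u W) subset_rfl).trans
      (clusterIn_subset_of_subset_clusterIn ?_)
    intro y hy
    rcases Finset.mem_union.1 hy with hy | hy
    · exact subset_clusterIn W R (Finset.mem_of_mem_erase hy)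
    · obtain ⟨hyW, huy⟩ := Finset.mem_filter.1 hy
      exact ⟨u, hu, .single ⟨huy, hRW hu, Finset.mem_of_mem_erase hyW⟩⟩

lemma clusterIn_univ_singleton [Fintype V] (v : V) :
    H.clusterIn Finset.univ {v} = (H.connectedComponentMk v).supp := by
  ext x
  simp [clusterIn, ConnectedComponent.mem_supp_iff, ConnectedComponent.eq, reachable_comm,
    reachable_iff_reflTransGen]

end SimpleGraph

lemma bernoulliMeasure_singleton_true (p : ℝ) : bernoulliMeasure p {true} = ENNReal.ofReal p := by
  simp [bernoulliMeasure]

lemma bernoulliMeasure_singleton_false (p : ℝ) :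
    bernoulliMeasure p {false} = ENNReal.ofReal (1 - p) := by
  simp [bernoulliMeasure]

lemma isProbabilityMeasure_bernoulliMeasure {p : ℝ} (hp0 : 0 ≤ p) (hp1 : p ≤ 1) :
    IsProbabilityMeasure (bernoulliMeasure p) := by
  constructor
  simp only [bernoulliMeasure, Measure.add_apply, Measure.smul_apply, smul_eq_mul,
    measure_univ, mul_one]
  rw [← ENNReal.ofReal_add hp0 (by linarith), add_sub_cancel, ENNReal.ofReal_one]

lemma isProbabilityMeasure_percolationMeasure {n : ℕ} {p : ℝ} (hp0 : 0 ≤ p) (hp1 : p ≤ 1) :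
    IsProbabilityMeasure (percolationMeasure n p) := by
  have := isProbabilityMeasure_bernoulliMeasure hp0 hp1
  unfold percolationMeasure
  infer_instance

def SimpleGraph.starEdges {V : Type*} [DecidableEq V] (G : SimpleGraph V) [DecidableRel G.Adj]
    (u : V) (S : Finset V) : Finset (Sym2 V) :=
  (S.filter (G.Adj u)).image (s(u, ·))

lemma SimpleGraph.card_starEdges_le {V : Type*} [Fintype V] [DecidableEq V] (G : SimpleGraph V)
    [DecidableRel G.Adj] (u : V) (S : Finset V) : (G.starEdges u S).card ≤ G.degree u :=
  Finset.card_image_le.trans <| Finset.card_le_card fun y hy =>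
    (G.mem_neighborFinset u y).2 (Finset.mem_filter.1 hy).2

lemma Finset.card_erase_union_filter_mk_mem_le {V : Type*} [DecidableEq V] (R S : Finset V)
    (u : V) (M : Finset (Sym2 V)) :
    (R.erase u ∪ S.filter (fun y => s(u, y) ∈ M)).card ≤ (R.erase u).card + M.card :=
  (Finset.card_union_le _ _).trans (Nat.add_le_add_left (Finset.card_le_card_of_injOn _
    (fun _ hy => (Finset.mem_filter.1 hy).2) fun _ _ _ _ h => Sym2.congr_right.1 h) _)

section Exploration

variable {n : ℕ} {G : SimpleGraph (Fin n)}

lemma percolatedGraph_adj {ω : Sym2 (Fin n) → Bool} {u v : Fin n} :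
    (percolatedGraph G ω).Adj u v ↔ G.Adj u v ∧ ω s(u, v) = true :=
  Iff.rfl

lemma filter_percolatedGraph_adj [DecidableRel G.Adj] (ω : Sym2 (Fin n) → Bool) (u : Fin n)
    (S : Finset (Fin n)) [DecidablePred ((percolatedGraph G ω).Adj u)] :
    S.filter ((percolatedGraph G ω).Adj u)
      = S.filter (fun y => s(u, y) ∈ (G.starEdges u S).filter (ω · = true)) := by
  ext y
  simp only [SimpleGraph.starEdges, Finset.mem_filter, Finset.mem_image, percolatedGraph_adj]
  exact ⟨fun ⟨hyS, huy, hω⟩ => ⟨hyS, ⟨y, ⟨hyS, huy⟩, rfl⟩, hω⟩,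
    fun ⟨hyS, ⟨z, ⟨_, huz⟩, hzy⟩, hω⟩ => ⟨hyS, Sym2.congr_right.1 hzy ▸ huz, hω⟩⟩

lemma ncard_clusterIn_percolatedGraph_le [DecidableRel G.Adj] {W R : Finset (Fin n)} {u : Fin n}
    (hu : u ∈ R) (hRW : R ⊆ W) (ω : Sym2 (Fin n) → Bool) :
    ((percolatedGraph G ω).clusterIn W R).ncard
      ≤ ((percolatedGraph G ω).clusterIn (W.erase u) (R.erase u ∪ (W.erase u).filter
          (fun y => s(u, y) ∈ (G.starEdges u (W.erase u)).filter (ω · = true)))).ncard + 1 := by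
  classical
  rw [SimpleGraph.clusterIn_eq_insert hu hRW, filter_percolatedGraph_adj]
  exact Set.ncard_insert_le _ _

/-- Exploring `u` reveals only the edges of `G.starEdges u (W.erase u)`, while the cluster in
the smaller window only sees edges with both ends in `W.erase u`. -/
lemma measure_pi_openPattern_inter_clusterIn [DecidableRel G.Adj] (ν : Measure Bool)
    [IsProbabilityMeasure ν] (W R : Finset (Fin n)) (u : Fin n) {M : Finset (Sym2 (Fin n))}
    (hM : M ⊆ G.starEdges u (W.erase u)) (P : Set (Fin n) → Prop) :
    Measure.pi (fun _ => ν) (openPattern (G.starEdges u (W.erase u)) M ∩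
        {ω | P ((percolatedGraph G ω).clusterIn (W.erase u)
          (R.erase u ∪ (W.erase u).filter (fun y => s(u, y) ∈ M)))})
      = ν {true} ^ M.card * ν {false} ^ ((G.starEdges u (W.erase u)).card - M.card) *
        Measure.pi (fun _ => ν) {ω | P ((percolatedGraph G ω).clusterIn (W.erase u)
          (R.erase u ∪ (W.erase u).filter (fun y => s(u, y) ∈ M)))} := by
  refine pi_openPattern_inter ν hM fun ω ω' h => congrArg P
    (SimpleGraph.clusterIn_congr (fun x hx y hy => ?_) _)
  simp only [percolatedGraph_adj]
  rw [h _ (Sym2.mk_notMem_image_mk_of_ne (Finset.ne_of_mem_erase hx) (Finset.ne_of_mem_erase hy) _)]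

theorem measure_pi_le_ncard_clusterIn_le {d : ℕ} (G : SimpleGraph (Fin n)) [DecidableRel G.Adj]
    (hdeg : ∀ v, G.degree v ≤ d) (ν : Measure Bool) [IsProbabilityMeasure ν]
    {Θ Γ : ENNReal} (hΘ : 1 ≤ Θ) (hkey : (ν {true} * Θ + ν {false}) ^ d ≤ Θ * Γ)
    (W R : Finset (Fin n)) (hRW : R ⊆ W) (m : ℕ) :
    Measure.pi (fun _ => ν) {ω | m ≤ ((percolatedGraph G ω).clusterIn W R).ncard}
      ≤ Θ ^ R.card * Γ ^ m := by
  induction W using Finset.strongInduction generalizing R m with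
  | _ W ih =>
  rcases m with _ | m
  · simpa using one_le_pow₀ hΘ
  obtain rfl | ⟨u, hu⟩ := R.eq_empty_or_nonempty
  · simp [SimpleGraph.clusterIn]
  set A := G.starEdges u (W.erase u)
  set E' : Finset (Sym2 (Fin n)) → Set (Sym2 (Fin n) → Bool) := fun M =>
    {ω | m ≤ ((percolatedGraph G ω).clusterIn (W.erase u)
      (R.erase u ∪ (W.erase u).filter (fun y => s(u, y) ∈ M))).ncard}
  have hcover : {ω | m + 1 ≤ ((percolatedGraph G ω).clusterIn W R).ncard}
      ⊆ ⋃ M ∈ A.powerset, openPattern A M ∩ E' M := fun ω hω =>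
    Set.mem_iUnion₂.2 ⟨A.filter (ω · = true), Finset.mem_powerset.2 (Finset.filter_subset _ _),
      fun i hi => by cases h : ω i <;> simp [hi, h],
      Nat.le_of_add_le_add_right (hω.trans (ncard_clusterIn_percolatedGraph_le hu hRW ω))⟩
  have hpiece : ∀ M ∈ A.powerset, Measure.pi (fun _ => ν) (openPattern A M ∩ E' M)
      ≤ ν {true} ^ M.card * ν {false} ^ (A.card - M.card) * Θ ^ M.card
        * (Θ ^ (R.erase u).card * Γ ^ m) := by
    intro M hM
    refine (measure_pi_openPattern_inter_clusterIn ν W R u (Finset.mem_powerset.1 hM)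
      (fun C => m ≤ C.ncard)).trans_le ?_
    rw [mul_assoc (ν {true} ^ M.card * ν {false} ^ (A.card - M.card))]
    gcongr
    calc Measure.pi (fun _ => ν) (E' M)
        ≤ Θ ^ (R.erase u ∪ (W.erase u).filter (fun y => s(u, y) ∈ M)).card * Γ ^ m :=
          ih _ (Finset.erase_ssubset (hRW hu)) _
            (Finset.union_subset (Finset.erase_subset_erase u hRW) (Finset.filter_subset _ _)) m
      _ ≤ Θ ^ ((R.erase u).card + M.card) * Γ ^ m := by
          gcongr
          exact Finset.card_erase_union_filter_mk_mem_le _ _ _ _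
      _ = Θ ^ M.card * (Θ ^ (R.erase u).card * Γ ^ m) := by ring
  have hbase : 1 ≤ ν {true} * Θ + ν {false} :=
    calc (1 : ENNReal) = ν {true} * 1 + ν {false} := by rw [mul_one, Bool.measure_true_add_false]
      _ ≤ ν {true} * Θ + ν {false} := by gcongr
  calc _ ≤ ∑ M ∈ A.powerset, Measure.pi (fun _ => ν) (openPattern A M ∩ E' M) :=
        (measure_mono hcover).trans (measure_biUnion_finset_le _ _)
    _ ≤ ∑ M ∈ A.powerset, ν {true} ^ M.card * ν {false} ^ (A.card - M.card) * Θ ^ M.card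
        * (Θ ^ (R.erase u).card * Γ ^ m) := Finset.sum_le_sum hpiece
    _ = (ν {true} * Θ + ν {false}) ^ A.card * (Θ ^ (R.erase u).card * Γ ^ m) := by
        rw [← Finset.sum_mul, Finset.sum_powerset_pow_mul_pow_mul_pow]
    _ ≤ Θ * Γ * (Θ ^ (R.erase u).card * Γ ^ m) := by
        gcongr
        exact (pow_le_pow_right₀ hbase ((G.card_starEdges_le u _).trans (hdeg u))).trans hkey
    _ = Θ ^ R.card * Γ ^ (m + 1) := by
        rw [← Finset.card_erase_add_one hu]
        ring

end Exploration

theorem percolationMeasure_exists_le_componentOrder_le {n d : ℕ} (G : SimpleGraph (Fin n))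
    [DecidableRel G.Adj] (hdeg : ∀ v, G.degree v ≤ d) {p θ γ : ℝ} (hp0 : 0 ≤ p) (hp1 : p ≤ 1)
    (hθ : 1 ≤ θ) (hkey : (1 - p + p * θ) ^ d ≤ θ * γ) (m : ℕ) :
    percolationMeasure n p
        {ω | ∃ c : (percolatedGraph G ω).ConnectedComponent, m ≤ componentOrder _ c}
      ≤ n * (ENNReal.ofReal θ * ENNReal.ofReal γ ^ m) := by
  have := isProbabilityMeasure_bernoulliMeasure hp0 hp1
  have hkey' : (bernoulliMeasure p {true} * ENNReal.ofReal θ + bernoulliMeasure p {false}) ^ d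
      ≤ ENNReal.ofReal θ * ENNReal.ofReal γ := by
    rw [bernoulliMeasure_singleton_true, bernoulliMeasure_singleton_false,
      ← ENNReal.ofReal_mul hp0, ← ENNReal.ofReal_add (by positivity) (by linarith),
      ← ENNReal.ofReal_pow (by positivity), ← ENNReal.ofReal_mul (by linarith)]
    exact ENNReal.ofReal_le_ofReal (by rwa [add_comm])
  have hsub : {ω | ∃ c : (percolatedGraph G ω).ConnectedComponent, m ≤ componentOrder _ c}
      ⊆ ⋃ v, {ω | m ≤ ((percolatedGraph G ω).clusterIn Finset.univ {v}).ncard} := by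
    rintro ω ⟨c, hc⟩
    induction c using SimpleGraph.ConnectedComponent.ind with | h v => ?_
    refine Set.mem_iUnion.2 ⟨v, ?_⟩
    rwa [Set.mem_ofPred_eq, SimpleGraph.clusterIn_univ_singleton, ← Nat.card_coe_set_eq]
  calc _ ≤ ∑ v, percolationMeasure n p
          {ω | m ≤ ((percolatedGraph G ω).clusterIn Finset.univ {v}).ncard} :=
        (measure_mono hsub).trans (measure_iUnion_fintype_le _ _)
    _ ≤ ∑ _v : Fin n, ENNReal.ofReal θ ^ 1 * ENNReal.ofReal γ ^ m := Finset.sum_le_sum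
        fun v _ => measure_pi_le_ncard_clusterIn_le G hdeg _
          (ENNReal.one_le_ofReal.2 hθ) hkey' _ {v} (Finset.subset_univ _) m
    _ = n * (ENNReal.ofReal θ * ENNReal.ofReal γ ^ m) := by simp

lemma pow_le_inv_sq_of_le_mul_log {γ C x : ℝ} (hγ0 : 0 < γ) (hγ1 : γ < 1)
    (hC : 2 ≤ C * -Real.log γ) (hx : 1 ≤ x) {m : ℕ} (hm : C * Real.log x ≤ m) :
    γ ^ m ≤ (x ^ 2)⁻¹ := by
  have hlogγ : Real.log γ < 0 := Real.log_neg hγ0 hγ1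
  have hlogx : 0 ≤ Real.log x := Real.log_nonneg hx
  rw [← Real.exp_log (pow_pos hγ0 m), ← Real.exp_log (by positivity : 0 < (x ^ 2)⁻¹),
    Real.exp_le_exp, Real.log_pow, Real.log_inv, Real.log_pow]
  push_cast
  nlinarith [mul_le_mul_of_nonpos_right hm hlogγ.le]

theorem toReal_percolationMeasure_exists_componentOrder_gt_le {n d : ℕ}
    (G : SimpleGraph (Fin n)) [DecidableRel G.Adj] (hdeg : ∀ v, G.degree v ≤ d) {p θ γ C : ℝ}
    (hp0 : 0 ≤ p) (hp1 : p ≤ 1) (hθ : 1 ≤ θ) (hkey : (1 - p + p * θ) ^ d ≤ θ * γ)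
    (hγ0 : 0 < γ) (hγ1 : γ < 1) (hC : 2 ≤ C * -Real.log γ) (hn : 0 < n) :
    (percolationMeasure n p {ω | ∃ c : (percolatedGraph G ω).ConnectedComponent,
        C * Real.log n < componentOrder _ c}).toReal ≤ θ / n := by
  set m := ⌈C * Real.log n⌉₊
  have hsub : {ω | ∃ c : (percolatedGraph G ω).ConnectedComponent,
        C * Real.log n < componentOrder _ c}
      ⊆ {ω | ∃ c : (percolatedGraph G ω).ConnectedComponent, m ≤ componentOrder _ c} :=
    fun ω ⟨c, hc⟩ => ⟨c, Nat.ceil_le.2 hc.le⟩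
  have hn' : (1 : ℝ) ≤ n := by exact_mod_cast hn
  have hγm := pow_le_inv_sq_of_le_mul_log hγ0 hγ1 hC hn' (Nat.le_ceil _)
  calc _ ≤ ((n : ENNReal) * (ENNReal.ofReal θ * ENNReal.ofReal γ ^ m)).toReal :=
        ENNReal.toReal_mono (by finiteness) ((measure_mono hsub).trans
          (percolationMeasure_exists_le_componentOrder_le G hdeg hp0 hp1 hθ hkey m))
    _ = n * (θ * γ ^ m) := by
        simp [ENNReal.toReal_ofReal (by linarith : 0 ≤ θ), ENNReal.toReal_ofReal hγ0.le]
    _ ≤ n * (θ * ((n : ℝ) ^ 2)⁻¹) := by gcongr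
    _ = θ / n := by field_simp

lemma mul_exp_one_sub_lt_one {α : ℝ} (hα0 : 0 < α) (hα1 : α < 1) : α * Real.exp (1 - α) < 1 :=
  calc α * Real.exp (1 - α) = Real.exp (Real.log α + (1 - α)) := by
        rw [Real.exp_add, Real.exp_log hα0]
    _ < Real.exp 0 := Real.exp_lt_exp.2 (by linarith [Real.log_lt_sub_one_of_pos hα0 hα1.ne])
    _ = 1 := Real.exp_zero

lemma one_sub_add_mul_pow_le_exp {p θ : ℝ} (hp : 0 ≤ p) (hθ : 1 ≤ θ) (d : ℕ) :
    (1 - p + p * θ) ^ d ≤ Real.exp (p * d * (θ - 1)) :=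
  calc (1 - p + p * θ) ^ d ≤ Real.exp (p * (θ - 1)) ^ d :=
        pow_le_pow_left₀ (by nlinarith) (by linarith [Real.add_one_le_exp (p * (θ - 1))]) d
    _ = Real.exp (p * d * (θ - 1)) := by rw [← Real.exp_nat_mul]; ring_nf

lemma one_sub_add_mul_inv_pow_le {α p : ℝ} (hα0 : 0 < α) (hα1 : α ≤ 1) (hp : 0 ≤ p) {d : ℕ}
    (hpd : p * d ≤ α) : (1 - p + p * α⁻¹) ^ d ≤ α⁻¹ * (α * Real.exp (1 - α)) :=
  calc (1 - p + p * α⁻¹) ^ d ≤ Real.exp (p * d * (α⁻¹ - 1)) :=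
        one_sub_add_mul_pow_le_exp hp ((one_le_inv₀ hα0).2 hα1) d
    _ ≤ Real.exp (α * (α⁻¹ - 1)) :=
        Real.exp_le_exp.2 (mul_le_mul_of_nonneg_right hpd (by linarith [(one_le_inv₀ hα0).2 hα1]))
    _ = α⁻¹ * (α * Real.exp (1 - α)) := by simp [mul_sub, hα0.ne']

lemma div_natCast_le_one {α : ℝ} (hα1 : α ≤ 1) (d : ℕ) : α / d ≤ 1 := by
  rcases Nat.eq_zero_or_pos d with rfl | hd
  · simp
  · exact div_le_one_of_le₀ (hα1.trans (by exact_mod_cast hd)) d.cast_nonneg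

lemma div_natCast_mul_le {α : ℝ} (hα : 0 ≤ α) (d : ℕ) : α / d * d ≤ α := by
  rcases Nat.eq_zero_or_pos d with rfl | hd
  · simpa using hα
  · rw [div_mul_cancel₀ α (by positivity)]


lemma tendsto_toReal_measure_of_toReal_measure_compl_le {Ω : ℕ → Type*}
    [∀ n, MeasurableSpace (Ω n)] (μ : ∀ n, Measure (Ω n)) [∀ n, IsProbabilityMeasure (μ n)]
    {s : ∀ n, Set (Ω n)} (hs : ∀ n, MeasurableSet (s n)) {c : ℝ}
    (h : ∀ᶠ n in atTop, (μ n (s n)ᶜ).toReal ≤ c / n) :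
    Tendsto (fun n => (μ n (s n)).toReal) atTop (nhds 1) := by
  have hcompl : Tendsto (fun n => (μ n (s n)ᶜ).toReal) atTop (nhds 0) :=
    squeeze_zero' (.of_forall fun _ => ENNReal.toReal_nonneg) h
      (tendsto_const_div_atTop_nhds_zero_nat c)
  have heq : ∀ n, (μ n (s n)).toReal = 1 - (μ n (s n)ᶜ).toReal := fun n => by
    rw [prob_compl_eq_one_sub (hs n), ENNReal.toReal_sub_of_le prob_le_one ENNReal.one_ne_top,
      ENNReal.toReal_one, sub_sub_cancel]
  simpa [heq] using hcompl.const_sub 1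

theorem stmt0_general (α : ℝ) (hα0 : 0 < α) (hα1 : α < 1)
    (d : ℕ → ℕ) (G : ∀ n : ℕ, SimpleGraph (Fin n))
    (hreg : ∀ n, regularOfDegree (G n) (d n)) :
    ∃ C : ℝ, 0 < C ∧
      Tendsto (fun n =>
        ((percolationMeasure n (α / (d n : ℝ)))
          {ω | ∀ c : (percolatedGraph (G n) ω).ConnectedComponent,
              (componentOrder _ c : ℝ) ≤ C * Real.log n}).toReal)
        atTop (nhds 1) := by
  classical
  set γ := α * Real.exp (1 - α)
  have hγ0 : 0 < γ := by positivity
  have hγ1 : γ < 1 := mul_exp_one_sub_lt_one hα0 hα1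
  have hlogγ : 0 < -Real.log γ := neg_pos.2 (Real.log_neg hγ0 hγ1)
  refine ⟨2 / -Real.log γ, by positivity, ?_⟩
  have hp0 : ∀ n, 0 ≤ α / d n := fun n => by positivity
  have hp1 : ∀ n, α / d n ≤ 1 := fun n => div_natCast_le_one hα1.le (d n)
  have := fun n => isProbabilityMeasure_percolationMeasure (n := n) (hp0 n) (hp1 n)
  refine tendsto_toReal_measure_of_toReal_measure_compl_le (fun n => percolationMeasure n _)
    (fun _ => .of_discrete) (c := α⁻¹) (eventually_gt_atTop 0 |>.mono fun n hn => ?_)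
  have hdeg : ∀ v, (G n).degree v ≤ d n := fun v => by
    rw [← SimpleGraph.card_neighborSet_eq_degree, ← Nat.card_eq_fintype_card, hreg n v]
  convert toReal_percolationMeasure_exists_componentOrder_gt_le (G n) hdeg (hp0 n) (hp1 n)
    ((one_le_inv₀ hα0).2 hα1.le) (one_sub_add_mul_inv_pow_le hα0 hα1.le (hp0 n)
      (div_natCast_mul_le hα0.le (d n))) hγ0 hγ1 (div_mul_cancel₀ 2 hlogγ.ne').ge hn using 3
  ext ω
  simp

theorem stmt0 (α : ℝ) (hα0 : 0 < α) (hα1 : α < 1)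
    (d : ℕ → ℕ) (G : ∀ n : ℕ, SimpleGraph (Fin n))
    (hreg : ∀ n, regularOfDegree (G n) (d n))
    (hd : Tendsto (fun n => (d n : ℝ)) atTop atTop)
    (hlam : Tendsto (fun n => secondEigenvalue (G n) (d n) / (d n : ℝ)) atTop (nhds 0)) :
    ∃ C : ℝ, 0 < C ∧
      Tendsto (fun n =>
        ((percolationMeasure n (α / (d n : ℝ)))
          {ω | ∀ c : (percolatedGraph (G n) ω).ConnectedComponent,
              (componentOrder _ c : ℝ) ≤ C * Real.log n}).toReal)
        atTop (nhds 1) :=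
  stmt0_general α hα0 hα1 d G hreg
end

section
/- Let G be a d-regular simple graph on vertex set V of size n with λ = λ(G) the maximum absolute value of its adjacency-matrix eigenvalues other than the largest. For subsets B, C ⊆ V with |B| = bn and |C| = cn (B = C allowed), let e(B,C) denote the number of ordered pairs (u,v) with u ∈ B, v ∈ C and {u,v} an edge of G. Then |e(B,C) − b·c·d·n| ≤ λ·n·√(bc). -/
open MeasureTheory Filter

/-!
Write `1_B = b • 1 + x` and `1_C = c • 1 + y` with `x, y` orthogonal to the all-ones vector `1`,
an eigenvector of the adjacency matrix `A` for the eigenvalue `d`. Regularity and symmetry of `A`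
kill the cross terms, so `e(B, C) = 1_B ⬝ A 1_C = b c d n + x ⬝ A y`. In an orthonormal eigenbasis
`x ⬝ A y = ∑ μᵢ ⟨uᵢ, x⟩ ⟨uᵢ, y⟩`, and every `μᵢ` with `⟨uᵢ, x⟩ ≠ 0` survives the removal of one
copy of `d` from the spectrum: if `μᵢ = d` were the only copy of `d`, then `1` would be a multiple
of `uᵢ`, and `x ⊥ 1` would force `⟨uᵢ, x⟩ = 0`. Cauchy–Schwarz then gives
`|x ⬝ A y| ≤ λ ‖x‖ ‖y‖ ≤ λ √(b n) √(c n)`.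
-/

open Matrix

theorem Finset.apply_mem_erase_map_univ_val {ι α : Type*} [Fintype ι] [DecidableEq α]
    (f : ι → α) {i j : ι} (hij : i ≠ j) : f i ∈ (Finset.univ.val.map f).erase (f j) := by
  classical
  rw [← Multiset.cons_erase (Finset.mem_univ_val j), Multiset.map_cons,
    Multiset.erase_cons_head]
  exact Multiset.mem_map_of_mem f (Multiset.mem_erase_of_ne hij |>.2 (Finset.mem_univ_val i))

namespace Set

variable {V : Type*} [Fintype V] (s : Set V)

theorem indicator_one_dotProduct_one : s.indicator (1 : V → ℝ) ⬝ᵥ 1 = Nat.card s := by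
  classical
  simp [dotProduct_one, indicator_apply, Nat.card_eq_fintype_card, Fintype.card_subtype]

theorem indicator_one_dotProduct_self :
    s.indicator (1 : V → ℝ) ⬝ᵥ s.indicator 1 = Nat.card s := by
  rw [← s.indicator_one_dotProduct_one]
  refine Finset.sum_congr rfl fun i _ => ?_
  by_cases hi : i ∈ s <;> simp [hi]

variable {s} {b : ℝ}

theorem indicator_one_sub_smul_one_dotProduct_one
    (hs : (Nat.card s : ℝ) = b * Fintype.card V) :
    (s.indicator 1 - b • 1 : V → ℝ) ⬝ᵥ 1 = 0 := by
  rw [sub_dotProduct, s.indicator_one_dotProduct_one, smul_dotProduct, one_dotProduct_one, hs,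
    smul_eq_mul, sub_self]

theorem indicator_one_sub_smul_one_dotProduct_self_le
    (hs : (Nat.card s : ℝ) = b * Fintype.card V) :
    (s.indicator 1 - b • 1 : V → ℝ) ⬝ᵥ (s.indicator 1 - b • 1) ≤ b * Fintype.card V := by
  have hexpand : (s.indicator 1 - b • 1 : V → ℝ) ⬝ᵥ (s.indicator 1 - b • 1) =
      b * Fintype.card V - b ^ 2 * Fintype.card V := by
    simp only [sub_dotProduct, dotProduct_sub, smul_dotProduct, dotProduct_smul,
      s.indicator_one_dotProduct_self, s.indicator_one_dotProduct_one,
      dotProduct_comm 1 (s.indicator 1), one_dotProduct_one, hs, smul_eq_mul]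
    ring
  nlinarith [sq_nonneg b, (Fintype.card V).cast_nonneg (α := ℝ)]

end Set

namespace Matrix.IsHermitian

variable {ι : Type*} [Fintype ι] [DecidableEq ι] {A : Matrix ι ι ℝ}

theorem sum_eigenvectorBasis_dotProduct_mul (hA : A.IsHermitian) (x y : ι → ℝ) :
    ∑ i, (hA.eigenvectorBasis i ⬝ᵥ x) * (hA.eigenvectorBasis i ⬝ᵥ y) = x ⬝ᵥ y := by
  have := hA.eigenvectorBasis.sum_inner_mul_inner (WithLp.toLp 2 x) (WithLp.toLp 2 y)
  simp only [EuclideanSpace.inner_eq_star_dotProduct, star_trivial] at this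
  simpa [dotProduct_comm] using this

theorem eigenvectorBasis_dotProduct_mulVec (hA : A.IsHermitian) (i : ι) (y : ι → ℝ) :
    hA.eigenvectorBasis i ⬝ᵥ (A *ᵥ y) = hA.eigenvalues i * (hA.eigenvectorBasis i ⬝ᵥ y) := by
  have hAT : Aᵀ = A := by simpa using hA.eq
  rw [dotProduct_mulVec, ← mulVec_transpose, hAT, mulVec_eigenvectorBasis, smul_dotProduct,
    smul_eq_mul]

theorem dotProduct_mulVec_eq_sum (hA : A.IsHermitian) (x y : ι → ℝ) :
    x ⬝ᵥ (A *ᵥ y) =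
      ∑ i, hA.eigenvalues i * ((hA.eigenvectorBasis i ⬝ᵥ x) * (hA.eigenvectorBasis i ⬝ᵥ y)) := by
  rw [← hA.sum_eigenvectorBasis_dotProduct_mul]
  refine Finset.sum_congr rfl fun i _ => ?_
  rw [eigenvectorBasis_dotProduct_mulVec]
  ring

theorem eigenvectorBasis_dotProduct_eq_zero (hA : A.IsHermitian) {v : ι → ℝ} {θ : ℝ}
    (hAv : A *ᵥ v = θ • v) {i : ι} (hi : hA.eigenvalues i ≠ θ) :
    hA.eigenvectorBasis i ⬝ᵥ v = 0 := by
  have h := hA.eigenvectorBasis_dotProduct_mulVec i v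
  rw [hAv, dotProduct_smul, smul_eq_mul] at h
  have h' : (hA.eigenvalues i - θ) * (hA.eigenvectorBasis i ⬝ᵥ v) = 0 := by
    linear_combination h.symm
  exact (mul_eq_zero.mp h').resolve_left (sub_ne_zero.mpr hi)

theorem eigenvalues_mem_erase_roots_charpoly (hA : A.IsHermitian) {v : ι → ℝ} {θ : ℝ}
    (hv : v ≠ 0) (hAv : A *ᵥ v = θ • v) {x : ι → ℝ} (hx : x ⬝ᵥ v = 0) {i : ι}
    (hxi : hA.eigenvectorBasis i ⬝ᵥ x ≠ 0) :
    hA.eigenvalues i ∈ A.charpoly.roots.erase θ := by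
  rw [hA.roots_charpoly_eq_eigenvalues, RCLike.ofReal_real_eq_id, Function.id_comp]
  by_cases hi : hA.eigenvalues i = θ
  · obtain ⟨j, hji, rfl⟩ : ∃ j ≠ i, hA.eigenvalues j = θ := by
      by_contra! hne
      have hv_off : ∀ j ≠ i, hA.eigenvectorBasis j ⬝ᵥ v = 0 := fun j hj =>
        hA.eigenvectorBasis_dotProduct_eq_zero hAv (hne j hj)
      have hsum (w : ι → ℝ) : w ⬝ᵥ v =
          (hA.eigenvectorBasis i ⬝ᵥ w) * (hA.eigenvectorBasis i ⬝ᵥ v) := by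
        rw [← hA.sum_eigenvectorBasis_dotProduct_mul,
          Finset.sum_eq_single i (fun j _ hj => by rw [hv_off j hj, mul_zero]) (by simp)]
      have hvi : hA.eigenvectorBasis i ⬝ᵥ v = 0 :=
        (mul_eq_zero.mp ((hsum x).symm.trans hx)).resolve_left hxi
      exact hv (dotProduct_self_eq_zero.mp (by rw [hsum v, hvi, mul_zero]))
    exact Finset.apply_mem_erase_map_univ_val _ hji.symm
  · exact (Multiset.mem_erase_of_ne hi).2 (Multiset.mem_map_of_mem _ (Finset.mem_univ_val i))

theorem abs_dotProduct_mulVec_le (hA : A.IsHermitian) {v : ι → ℝ} {θ l : ℝ} (hv : v ≠ 0)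
    (hAv : A *ᵥ v = θ • v) (hl₀ : 0 ≤ l) (hl : ∀ μ ∈ A.charpoly.roots.erase θ, |μ| ≤ l) {x : ι → ℝ}
    (hx : x ⬝ᵥ v = 0) (y : ι → ℝ) :
    |x ⬝ᵥ (A *ᵥ y)| ≤ l * √(x ⬝ᵥ x) * √(y ⬝ᵥ y) := by
  set p := fun i => hA.eigenvectorBasis i ⬝ᵥ x
  set q := fun i => hA.eigenvectorBasis i ⬝ᵥ y
  have hterm (i : ι) : |hA.eigenvalues i * (p i * q i)| ≤ l * (|p i| * |q i|) := by
    rcases eq_or_ne (p i) 0 with hpi | hpi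
    · simp [hpi]
    rw [abs_mul, abs_mul]
    gcongr
    exact hl _ (hA.eigenvalues_mem_erase_roots_charpoly hv hAv hx hpi)
  have hnorm (w : ι → ℝ) : ∑ i, |hA.eigenvectorBasis i ⬝ᵥ w| ^ 2 = w ⬝ᵥ w := by
    simp_rw [sq_abs, sq]
    exact hA.sum_eigenvectorBasis_dotProduct_mul w w
  calc |x ⬝ᵥ (A *ᵥ y)| = |∑ i, hA.eigenvalues i * (p i * q i)| := by
        rw [hA.dotProduct_mulVec_eq_sum]
    _ ≤ ∑ i, |hA.eigenvalues i * (p i * q i)| := Finset.abs_sum_le_sum_abs _ _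
    _ ≤ ∑ i, l * (|p i| * |q i|) := Finset.sum_le_sum fun i _ => hterm i
    _ = l * ∑ i, |p i| * |q i| := by rw [Finset.mul_sum]
    _ ≤ l * (√(∑ i, |p i| ^ 2) * √(∑ i, |q i| ^ 2)) := by
        gcongr
        exact Real.sum_mul_le_sqrt_mul_sqrt _ _ _
    _ = l * √(x ⬝ᵥ x) * √(y ⬝ᵥ y) := by rw [hnorm, hnorm, mul_assoc]

end Matrix.IsHermitian

namespace SimpleGraph

variable {V : Type*} [Fintype V] (G : SimpleGraph V) [DecidableRel G.Adj]

theorem adjMatrix_mulVec_one_of_regular {d : ℕ} (hd : G.IsRegularOfDegree d) :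
    G.adjMatrix ℝ *ᵥ 1 = (d : ℝ) • 1 := by
  ext v
  simpa using adjMatrix_mulVec_const_apply_of_regular hd (a := (1 : ℝ)) (v := v)

theorem natCast_card_adj_eq_dotProduct (B C : Set V) :
    (Nat.card {p : V × V // p.1 ∈ B ∧ p.2 ∈ C ∧ G.Adj p.1 p.2} : ℝ) =
      B.indicator 1 ⬝ᵥ (G.adjMatrix ℝ *ᵥ C.indicator 1) := by
  classical
  rw [dotProduct_mulVec_adjMatrix, Nat.card_eq_fintype_card, Fintype.card_subtype,
    Finset.card_filter, Nat.cast_sum, Fintype.sum_prod_type]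
  refine Finset.sum_congr rfl fun i _ => Finset.sum_congr rfl fun j _ => ?_
  by_cases hi : i ∈ B <;> by_cases hj : j ∈ C <;> simp [hi, hj]

theorem abs_card_adj_sub_le [DecidableEq V] {d : ℕ} (hd : G.IsRegularOfDegree d) {l : ℝ}
    (hl₀ : 0 ≤ l) (hl : ∀ μ ∈ (G.adjMatrix ℝ).charpoly.roots.erase (d : ℝ), |μ| ≤ l) (B C : Set V)
    {b c : ℝ} (hB : (Nat.card B : ℝ) = b * Fintype.card V)
    (hC : (Nat.card C : ℝ) = c * Fintype.card V) :
    |(Nat.card {p : V × V // p.1 ∈ B ∧ p.2 ∈ C ∧ G.Adj p.1 p.2} : ℝ) -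
        b * c * d * Fintype.card V| ≤ l * Fintype.card V * √(b * c) := by
  cases isEmpty_or_nonempty V
  · simp
  set N : ℝ := (Fintype.card V : ℝ)
  set A := G.adjMatrix ℝ
  set x' : V → ℝ := B.indicator 1 - b • 1
  set y' : V → ℝ := C.indicator 1 - c • 1
  have hA1 : A *ᵥ 1 = (d : ℝ) • 1 := G.adjMatrix_mulVec_one_of_regular hd
  have hx'1 : x' ⬝ᵥ 1 = 0 := B.indicator_one_sub_smul_one_dotProduct_one hB
  have h1A : (1 : V → ℝ) ᵥ* A = (d : ℝ) • 1 := by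
    rw [← mulVec_transpose, transpose_adjMatrix, hA1]
  have hcentered :
      x' ⬝ᵥ (A *ᵥ y') = B.indicator 1 ⬝ᵥ (A *ᵥ C.indicator 1) - b * c * d * N := by
    rw [mulVec_sub, mulVec_smul, hA1, dotProduct_sub, smul_smul, dotProduct_smul, hx'1,
      sub_dotProduct, smul_dotProduct, dotProduct_mulVec 1, h1A, smul_dotProduct,
      one_dotProduct, ← dotProduct_one, C.indicator_one_dotProduct_one, hC]
    simp only [smul_eq_mul]
    ring
  have hsqrt : √(b * N) * √(c * N) = N * √(b * c) := by
    rw [← Real.sqrt_mul (hB ▸ Nat.cast_nonneg _), show b * N * (c * N) = b * c * N ^ 2 by ring,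
      Real.sqrt_mul' _ (sq_nonneg N), Real.sqrt_sq (Nat.cast_nonneg _), mul_comm]
  rw [G.natCast_card_adj_eq_dotProduct, ← hcentered]
  calc |x' ⬝ᵥ (A *ᵥ y')| ≤ l * √(x' ⬝ᵥ x') * √(y' ⬝ᵥ y') :=
        (G.isHermitian_adjMatrix ℝ).abs_dotProduct_mulVec_le one_ne_zero hA1 hl₀ hl hx'1 y'
    _ ≤ l * √(b * N) * √(c * N) := by
        gcongr
        · exact B.indicator_one_sub_smul_one_dotProduct_self_le hB
        · exact C.indicator_one_sub_smul_one_dotProduct_self_le hC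
    _ = l * N * √(b * c) := by rw [mul_assoc, hsqrt, mul_assoc]

end SimpleGraph

theorem secondEigenvalue_nonneg {n : ℕ} (G : SimpleGraph (Fin n)) (d : ℕ) :
    0 ≤ secondEigenvalue G d :=
  NNReal.coe_nonneg _

theorem abs_le_secondEigenvalue {n : ℕ} (G : SimpleGraph (Fin n)) [DecidableRel G.Adj] (d : ℕ) :
    ∀ μ ∈ (G.adjMatrix ℝ).charpoly.roots.erase (d : ℝ), |μ| ≤ secondEigenvalue G d := by
  intro μ hμ
  rw [← Real.coe_toNNReal _ (abs_nonneg μ), secondEigenvalue, NNReal.coe_le_coe]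
  convert Multiset.le_sup (Multiset.mem_map_of_mem (fun x => Real.toNNReal |x|) hμ)

theorem stmt7 {n : ℕ} (G : SimpleGraph (Fin n)) (d : ℕ) (hreg : regularOfDegree G d)
    (B C : Set (Fin n)) (b c : ℝ)
    (hB : (Nat.card B : ℝ) = b * n) (hC : (Nat.card C : ℝ) = c * n) :
    |(Nat.card {p : Fin n × Fin n // p.1 ∈ B ∧ p.2 ∈ C ∧ G.Adj p.1 p.2} : ℝ)
        - b * c * d * n| ≤ secondEigenvalue G d * n * Real.sqrt (b * c) := by
  classical
  have hd : G.IsRegularOfDegree d := fun v => by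
    rw [← hreg v, Nat.card_eq_fintype_card, SimpleGraph.card_neighborSet_eq_degree]
  simpa using G.abs_card_adj_sub_le hd (secondEigenvalue_nonneg G d)
    (abs_le_secondEigenvalue G d) B C (by simpa using hB) (by simpa using hC)
end

section
/- Let G be a d-regular simple graph on n vertices, let 0 < p ≤ 1, and let G_p be the random subgraph with edge probability p. For 1 ≤ k ≤ n let T_k be the number of vertices of G_p contained in connected components that are trees with exactly k vertices, and let t_k be the number of k-vertex subtrees of G. Then E[T_k] ≥ k · t_k · p^{k-1} · (1−p)^{kd + k²}. -/
open MeasureTheory Filter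

/-!
For each `k`-vertex subtree `T` of `G`, consider the event that the `k - 1` edges of `T` are
retained while every other edge of `G` at a vertex of `T` is deleted. By regularity there are at
most `k * d` such edges, so the event has probability at least `p ^ (k - 1) * (1 - p) ^ (k * d)`.
On this event `T` is a whole component of `G_p`; hence the trees for which it occurs are
vertex-disjoint and each contributes `k` vertices to `T_k`. Taking expectations and summing over
the `t_k` subtrees gives the bound.
-/

instance (p : ℝ) : IsFiniteMeasure (bernoulliMeasure p) :=
  ⟨by simp [bernoulliMeasure]⟩

instance (n : ℕ) (p : ℝ) : IsFiniteMeasure (percolationMeasure n p) := by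
  unfold percolationMeasure; infer_instance

lemma bernoulliMeasure_univ {p : ℝ} (hp0 : 0 ≤ p) (hp1 : p ≤ 1) :
    bernoulliMeasure p Set.univ = 1 := by
  simp [bernoulliMeasure, ← ENNReal.ofReal_add hp0 (sub_nonneg.2 hp1)]

section Bernoulli

open Finset

lemma measureReal_pi_bernoulliMeasure_cylinder {ι : Type*} [Fintype ι] [DecidableEq ι]
    {p : ℝ} (hp0 : 0 ≤ p) (hp1 : p ≤ 1) {A B : Finset ι} (hAB : Disjoint A B) :
    (Measure.pi fun _ : ι => bernoulliMeasure p).real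
        {ω | (∀ i ∈ A, ω i = true) ∧ ∀ i ∈ B, ω i = false} = p ^ #A * (1 - p) ^ #B := by
  have hcyl : {ω : ι → Bool | (∀ i ∈ A, ω i = true) ∧ ∀ i ∈ B, ω i = false} =
      Set.univ.pi fun i => {b | (i ∈ A → b = true) ∧ (i ∈ B → b = false)} := by
    ext ω
    simp only [Set.mem_ofPred_eq, Set.mem_pi, Set.mem_univ, true_implies]
    exact ⟨fun h i => ⟨h.1 i, h.2 i⟩, fun h => ⟨fun i => (h i).1, fun i => (h i).2⟩⟩
  have hfactor : ∀ i, bernoulliMeasure p {b | (i ∈ A → b = true) ∧ (i ∈ B → b = false)} =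
      (if i ∈ A then ENNReal.ofReal p else 1) * (if i ∈ B then ENNReal.ofReal (1 - p) else 1) := by
    intro i
    by_cases hA : i ∈ A
    · have hB : i ∉ B := disjoint_left.1 hAB hA
      simp [hA, hB, ← bernoulliMeasure_singleton_true]
    · by_cases hB : i ∈ B
      · simp [hA, hB, ← bernoulliMeasure_singleton_false]
      · simp only [hA, hB, if_false, false_imp_iff, and_self, Set.ofPred_true, mul_one]
        exact bernoulliMeasure_univ hp0 hp1
  rw [measureReal_def, hcyl, Measure.pi_pi]
  simp only [hfactor, prod_mul_distrib, prod_ite_mem univ, univ_inter, prod_const]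
  rw [ENNReal.toReal_mul, ENNReal.toReal_pow, ENNReal.toReal_pow, ENNReal.toReal_ofReal hp0,
    ENNReal.toReal_ofReal (sub_nonneg.2 hp1)]

end Bernoulli

namespace SimpleGraph.Subgraph

variable {V : Type*} {G H : SimpleGraph V} {T T' : G.Subgraph} {u v : V}

/-- For connected `T`, this says that `T` is a connected component of `H`. -/
def IsIsolatedIn (T : G.Subgraph) (H : SimpleGraph V) : Prop :=
  ∀ ⦃u v⦄, u ∈ T.verts → (H.Adj u v ↔ T.Adj u v)

namespace IsIsolatedIn

lemma adj (h : T.IsIsolatedIn H) (huv : T.Adj u v) : H.Adj u v :=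
  (h huv.fst_mem).2 huv

lemma induce_verts_eq (h : T.IsIsolatedIn H) : H.induce T.verts = T.coe := by
  ext ⟨u, hu⟩ ⟨v, hv⟩
  exact h hu

lemma mem_verts_of_reachable (h : T.IsIsolatedIn H) (hu : u ∈ T.verts)
    (huv : H.Reachable u v) : v ∈ T.verts := by
  obtain ⟨w⟩ := huv
  induction w with
  | nil => exact hu
  | cons hadj _ ih => exact ih ((h hu).1 hadj).snd_mem

lemma supp_connectedComponentMk (h : T.IsIsolatedIn H) (hT : T.coe.Connected)
    (hv : v ∈ T.verts) : (H.connectedComponentMk v).supp = T.verts := by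
  ext u
  rw [ConnectedComponent.mem_supp_iff, ConnectedComponent.eq]
  refine ⟨fun hvu => h.mem_verts_of_reachable hv hvu.symm, fun hu => ?_⟩
  let f : T.coe →g H := ⟨Subtype.val, fun hab => h.adj hab⟩
  exact (hT.preconnected ⟨u, hu⟩ ⟨v, hv⟩).map f

lemma eq_of_mem_verts (h : T.IsIsolatedIn H) (h' : T'.IsIsolatedIn H) (hT : T.coe.Connected)
    (hT' : T'.coe.Connected) (hv : v ∈ T.verts) (hv' : v ∈ T'.verts) : T = T' := by
  have hverts : T.verts = T'.verts := by
    rw [← h.supp_connectedComponentMk hT hv, ← h'.supp_connectedComponentMk hT' hv']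
  refine Subgraph.ext hverts ?_
  ext a b
  refine ⟨fun hab => ?_, fun hab => ?_⟩
  · exact (h' (hverts ▸ hab.fst_mem)).1 (h.adj hab)
  · exact (h (hverts ▸ hab.fst_mem)).1 (h'.adj hab)

end IsIsolatedIn

lemma ncard_edgeSet_add_one_of_isTree [Finite V] (hT : T.coe.IsTree) :
    T.edgeSet.ncard + 1 = T.verts.ncard := by
  classical
  have := Fintype.ofFinite T.verts
  rw [← T.image_coe_edgeSet_coe, Set.ncard_image_of_injective _
    (Sym2.map.injective Subtype.val_injective), Set.ncard_eq_toFinset_card',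
    ← Nat.card_coe_set_eq T.verts, Nat.card_eq_fintype_card, ← hT.card_edgeFinset]
  rfl

end SimpleGraph.Subgraph

section TreeComponents

open Finset SimpleGraph

variable {n : ℕ} {G H : SimpleGraph (Fin n)}

lemma SimpleGraph.Subgraph.IsIsolatedIn.mem_verticesInTreeComponents {T : G.Subgraph} {k : ℕ}
    (h : T.IsIsolatedIn H) (hT : T.coe.IsTree) (hk : Nat.card T.verts = k) {v : Fin n}
    (hv : v ∈ T.verts) :
    componentOrder H (H.connectedComponentMk v) = k ∧
      componentIsTree H (H.connectedComponentMk v) := by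
  have hsupp := h.supp_connectedComponentMk hT.connected hv
  refine ⟨by rw [componentOrder, hsupp, hk], ?_⟩
  rw [componentIsTree, hsupp, h.induce_verts_eq]
  exact hT

lemma mul_card_le_verticesInTreeComponentsOfSize {k : ℕ} (S : Finset G.Subgraph)
    (hS : ∀ T ∈ S, T.coe.IsTree ∧ Nat.card T.verts = k ∧ T.IsIsolatedIn H) :
    k * #S ≤ verticesInTreeComponentsOfSize H k := by
  classical
  have hdisj : (S : Set G.Subgraph).PairwiseDisjoint fun T => T.verts.toFinset := by
    intro T hT T' hT' hne
    rw [Function.onFun, Set.disjoint_toFinset]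
    exact Set.disjoint_left.2 fun v hv hv' => hne <| (hS T hT).2.2.eq_of_mem_verts (hS T' hT').2.2
      (hS T hT).1.connected (hS T' hT').1.connected hv hv'
  have hsub : S.biUnion (fun T => T.verts.toFinset) ⊆ {v | componentOrder H
      (H.connectedComponentMk v) = k ∧ componentIsTree H (H.connectedComponentMk v)}.toFinset := by
    intro v hv
    obtain ⟨T, hT, hvT⟩ := mem_biUnion.1 hv
    rw [Set.mem_toFinset] at hvT ⊢
    exact (hS T hT).2.2.mem_verticesInTreeComponents (hS T hT).1 (hS T hT).2.1 hvT
  calc k * #S = #(S.biUnion fun T => T.verts.toFinset) := by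
        rw [card_biUnion hdisj, sum_const_nat fun T hT => ?_, mul_comm]
        rw [Set.toFinset_card, ← Nat.card_eq_fintype_card, (hS T hT).2.1]
    _ ≤ _ := card_le_card hsub
    _ = _ := by rw [verticesInTreeComponentsOfSize, Nat.card_eq_card_toFinset]

lemma card_biUnion_incidenceFinset_le [DecidableRel G.Adj] {d : ℕ} (hreg : regularOfDegree G d)
    (s : Finset (Fin n)) : #(s.biUnion fun v => G.incidenceFinset v) ≤ #s * d :=
  calc #(s.biUnion fun v => G.incidenceFinset v) ≤ ∑ v ∈ s, #(G.incidenceFinset v) :=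
        card_biUnion_le
    _ = #s * d := by
      rw [sum_const_nat fun v _ => ?_]
      rw [card_incidenceFinset_eq_degree, ← hreg v, degree, neighborFinset, Set.toFinset_card,
        Nat.card_eq_fintype_card]

lemma isIsolatedIn_percolatedGraph {T : G.Subgraph} {ω : Sym2 (Fin n) → Bool}
    (hT : ∀ e ∈ T.edgeSet, ω e = true)
    (hbdry : ∀ e ∈ G.edgeSet, (∃ v ∈ T.verts, v ∈ e) → e ∉ T.edgeSet → ω e = false) :
    T.IsIsolatedIn (percolatedGraph G ω) := by
  intro u v hu
  refine ⟨fun ⟨hG, hω⟩ => ?_, fun huv => ⟨T.adj_sub huv, hT _ huv⟩⟩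
  by_contra huv
  have := hbdry s(u, v) hG ⟨u, hu, Sym2.mem_mk_left u v⟩ huv
  simp_all

lemma pow_mul_pow_le_measureReal_isIsolatedIn {d k : ℕ} (hreg : regularOfDegree G d) {p : ℝ}
    (hp0 : 0 ≤ p) (hp1 : p ≤ 1) {T : G.Subgraph} (hT : T.coe.IsTree)
    (hk : Nat.card T.verts = k) :
    p ^ (k - 1) * (1 - p) ^ (k * d) ≤
      (percolationMeasure n p).real {ω | T.IsIsolatedIn (percolatedGraph G ω)} := by
  classical
  set A := T.edgeSet.toFinset
  set B := (T.verts.toFinset.biUnion fun v => G.incidenceFinset v) \ A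
  have hA : #A = k - 1 := by
    have := T.ncard_edgeSet_add_one_of_isTree hT
    rw [← Nat.card_coe_set_eq T.verts, hk] at this
    simp only [A, Set.toFinset_card, ← Nat.card_eq_fintype_card, Nat.card_coe_set_eq]
    omega
  have hB : #B ≤ k * d := by
    refine (card_le_card sdiff_subset).trans ?_
    rw [← hk, Nat.card_eq_card_toFinset]
    exact card_biUnion_incidenceFinset_le hreg _
  have hcyl : {ω : Sym2 (Fin n) → Bool | (∀ e ∈ A, ω e = true) ∧ ∀ e ∈ B, ω e = false} ⊆
      {ω | T.IsIsolatedIn (percolatedGraph G ω)} := by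
    rintro ω ⟨hωA, hωB⟩
    refine isIsolatedIn_percolatedGraph (fun e he => hωA e (Set.mem_toFinset.2 he)) ?_
    rintro e hG ⟨v, hv, hve⟩ heT
    refine hωB e (mem_sdiff.2 ⟨mem_biUnion.2 ⟨v, Set.mem_toFinset.2 hv, ?_⟩, ?_⟩)
    · exact (mem_incidenceFinset G v e).2 ⟨hG, hve⟩
    · exact fun he => heT (Set.mem_toFinset.1 he)
  calc p ^ (k - 1) * (1 - p) ^ (k * d) ≤ p ^ #A * (1 - p) ^ #B := by
        rw [hA]
        exact mul_le_mul_of_nonneg_left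
          (pow_le_pow_of_le_one (sub_nonneg.2 hp1) (sub_le_self _ hp0) hB) (by positivity)
    _ = (percolationMeasure n p).real
          {ω | (∀ e ∈ A, ω e = true) ∧ ∀ e ∈ B, ω e = false} :=
        (measureReal_pi_bernoulliMeasure_cylinder hp0 hp1 disjoint_sdiff).symm
    _ ≤ _ := measureReal_mono hcyl

lemma sum_measureReal_isIsolatedIn_le_integral {k : ℕ} (μ : Measure (Sym2 (Fin n) → Bool))
    [IsFiniteMeasure μ] (S : Finset G.Subgraph)
    (hS : ∀ T ∈ S, T.coe.IsTree ∧ Nat.card T.verts = k) :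
    k * ∑ T ∈ S, μ.real {ω | T.IsIsolatedIn (percolatedGraph G ω)} ≤
      ∫ ω, (verticesInTreeComponentsOfSize (percolatedGraph G ω) k : ℝ) ∂μ := by
  classical
  set E : G.Subgraph → Set (Sym2 (Fin n) → Bool) :=
    fun T => {ω | T.IsIsolatedIn (percolatedGraph G ω)}
  have hpointwise : ∀ ω, (k : ℝ) * ∑ T ∈ S, (E T).indicator 1 ω ≤
      (verticesInTreeComponentsOfSize (percolatedGraph G ω) k : ℝ) := by
    intro ω
    have := mul_card_le_verticesInTreeComponentsOfSize
      (S.filter fun T => T.IsIsolatedIn (percolatedGraph G ω)) fun T hT =>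
        let ⟨hTS, hiso⟩ := mem_filter.1 hT
        ⟨(hS T hTS).1, (hS T hTS).2, hiso⟩
    simp only [Set.indicator_apply, Pi.one_apply, ← sum_filter, sum_const, nsmul_one]
    exact_mod_cast this
  calc k * ∑ T ∈ S, μ.real (E T) = ∫ ω, (k : ℝ) * ∑ T ∈ S, (E T).indicator 1 ω ∂μ := by
        rw [integral_const_mul, integral_finsetSum _ fun _ _ => .of_finite]
        simp only [integral_indicator_one (MeasurableSet.of_discrete)]
    _ ≤ _ := integral_mono .of_finite .of_finite hpointwise

end TreeComponents

theorem stmt12_general {n : ℕ} (G : SimpleGraph (Fin n)) (d : ℕ) (hreg : regularOfDegree G d)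
    (p : ℝ) (hp0 : 0 < p) (hp1 : p ≤ 1) (k : ℕ) :
    (k : ℝ) * (subtreeCount G k : ℝ) * p ^ (k - 1) * (1 - p) ^ (k * d + k ^ 2) ≤
      ∫ ω, (verticesInTreeComponentsOfSize (percolatedGraph G ω) k : ℝ)
        ∂(percolationMeasure n p) := by
  classical
  set S := Finset.univ.filter fun T : G.Subgraph => T.coe.IsTree ∧ Nat.card T.verts = k
  have hS : subtreeCount G k = S.card := by
    rw [subtreeCount, Nat.card_eq_fintype_card, Fintype.card_subtype]
  calc (k : ℝ) * (subtreeCount G k : ℝ) * p ^ (k - 1) * (1 - p) ^ (k * d + k ^ 2)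
      ≤ k * ∑ _T ∈ S, p ^ (k - 1) * (1 - p) ^ (k * d) := by
        rw [Finset.sum_const, nsmul_eq_mul, hS, mul_assoc, mul_assoc]
        gcongr _ * (_ * (_ * ?_))
        exact pow_le_pow_of_le_one (by linarith) (by linarith) (Nat.le_add_right _ _)
    _ ≤ k * ∑ T ∈ S, (percolationMeasure n p).real {ω | T.IsIsolatedIn (percolatedGraph G ω)} := by
        gcongr with T hT
        obtain ⟨hT, hk⟩ := (Finset.mem_filter.1 hT).2
        exact pow_mul_pow_le_measureReal_isIsolatedIn hreg hp0.le hp1 hT hk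
    _ ≤ _ := sum_measureReal_isIsolatedIn_le_integral _ S fun T hT => (Finset.mem_filter.1 hT).2

theorem stmt12 {n : ℕ} (G : SimpleGraph (Fin n)) (d : ℕ) (hreg : regularOfDegree G d)
    (p : ℝ) (hp0 : 0 < p) (hp1 : p ≤ 1) (k : ℕ) (hk1 : 1 ≤ k) (hkn : k ≤ n) :
    (k : ℝ) * (subtreeCount G k : ℝ) * p ^ (k - 1) * (1 - p) ^ (k * d + k ^ 2) ≤
      ∫ ω, (verticesInTreeComponentsOfSize (percolatedGraph G ω) k : ℝ)
        ∂(percolationMeasure n p) :=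
  stmt12_general G d hreg p hp0 hp1 k
end

section
/- Define f(α) = Σ_{k=1}^∞ (k^{k-1}/k!) α^{k-1} e^{−αk} for α > 0. Then f(α) = 1 for 0 < α ≤ 1, and f(α) = ᾱ/α for α > 1, where ᾱ ∈ (0,1) is the unique solution other than α of x e^{-x} = α e^{-α}. Equivalently, for every x with 0 < x ≤ 1, Σ_{k=1}^∞ (k^{k-1}/k!) (x e^{-x})^k = x. -/
open Filter

/-- `f(α) = Σ_{k≥1} (k^{k-1}/k!) α^{k-1} e^{-αk}` (the sum index below is shifted by one). -/
noncomputable def fAlpha (α : ℝ) : ℝ :=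
  ∑' k : ℕ, ((k + 1 : ℝ) ^ k / Nat.factorial (k + 1)) * α ^ k * Real.exp (-α * (k + 1))

/-!
Write `T t = ∑ k^(k-1)/k! t^k`; the claim is `T (x e^{-x}) = x` on `(0, 1]`, since
`f α = T (α e^{-α}) / α` and `α e^{-α} = ᾱ e^{-ᾱ}`. For small `x`, expanding `e^{-kx}` turns
`T (x e^{-x})` into an absolutely convergent double series whose coefficient of `x^n` is
`(1/n!) ∑ (-1)^(n-k) C(n,k) k^(n-1)`, an `n`-th finite difference of a polynomial of degree
`n - 1`; so only the `x^1` term survives. Since `x e^{-x} < e^{-1}`, the radius of convergence of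
`T`, for `x ≠ 1`, both sides are analytic on `(0, 1)` and agree there by the identity theorem.
At `x = 1` the coefficients are nonnegative, so the series at `e^{-1}` is the monotone limit of
the values at `x e^{-x}` as `x → 1⁻`.
-/

open Finset Topology Real
open scoped Nat

theorem sum_range_neg_one_pow_mul_choose_mul_pow_eq_zero {R : Type*} [CommRing R] {j n : ℕ}
    (h : j < n) : ∑ k ∈ range (n + 1), (-1 : R) ^ (n - k) * n.choose k * (k : R) ^ j = 0 := by
  have := congr_fun (fwdDiff_iter_pow_eq_zero_of_lt (R := R) h) 0
  rw [fwdDiff_iter_eq_sum_shift] at this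
  simpa [zsmul_eq_mul] using this

/-- The case `k = 0` is split off because `0 ^ (0 - 1) / 0! = 1`. -/
noncomputable def treeCoeff (k : ℕ) : ℝ := if k = 0 then 0 else (k : ℝ) ^ (k - 1) / k !

theorem treeCoeff_succ (k : ℕ) : treeCoeff (k + 1) = (k + 1 : ℝ) ^ k / (k + 1)! := by
  simp [treeCoeff]

theorem treeCoeff_nonneg (k : ℕ) : 0 ≤ treeCoeff k := by
  unfold treeCoeff; split_ifs <;> positivity

theorem treeCoeff_le_exp_one_pow (k : ℕ) : treeCoeff k ≤ exp 1 ^ k := by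
  rw [← exp_nat_mul, mul_one]
  unfold treeCoeff
  split_ifs with hk
  · positivity
  · calc (k : ℝ) ^ (k - 1) / k ! ≤ (k : ℝ) ^ k / k ! := by
          gcongr
          · exact_mod_cast Nat.one_le_iff_ne_zero.mpr hk
          · omega
      _ ≤ exp k := pow_div_factorial_le_exp _ k.cast_nonneg k

theorem summable_treeCoeff_mul_pow {t : ℝ} (ht₀ : 0 ≤ t) (ht : t < exp (-1)) :
    Summable fun k ↦ treeCoeff k * t ^ k := by
  have hq : exp 1 * t < 1 := by
    simpa [← exp_add] using mul_lt_mul_of_pos_left ht (exp_pos 1)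
  refine .of_nonneg_of_le (fun k ↦ by have := treeCoeff_nonneg k; positivity) (fun k ↦ ?_)
    (summable_geometric_of_lt_one (by positivity) hq)
  rw [mul_pow]
  exact mul_le_mul_of_nonneg_right (treeCoeff_le_exp_one_pow k) (by positivity)

theorem treeCoeff_mul_neg_pow_div_factorial {n k : ℕ} (hk : k ≤ n) (hn : 2 ≤ n) :
    treeCoeff k * ((-k : ℝ) ^ (n - k) / (n - k)!) =
      (-1 : ℝ) ^ (n - k) * n.choose k * (k : ℝ) ^ (n - 1) / n ! := by
  rcases Nat.eq_zero_or_pos k with rfl | hk₀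
  · simp [treeCoeff, zero_pow (show n - 1 ≠ 0 by omega)]
  have hchoose : (n.choose k : ℝ) * k ! * (n - k)! = n ! := by
    exact_mod_cast Nat.choose_mul_factorial_mul_factorial hk
  have hpow : (k : ℝ) ^ (n - 1) = (k : ℝ) ^ (k - 1) * (k : ℝ) ^ (n - k) := by
    rw [← pow_add]; congr 1; omega
  have hchoose₀ : (n.choose k : ℝ) ≠ 0 := by exact_mod_cast (Nat.choose_pos hk).ne'
  rw [treeCoeff, if_neg hk₀.ne', neg_pow, hpow, ← hchoose]
  field_simp

theorem sum_antidiagonal_treeCoeff_mul_exp_series (x : ℝ) (n : ℕ) :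
    ∑ p ∈ antidiagonal n, treeCoeff p.1 * x ^ p.1 * ((p.1 * -x) ^ p.2 / p.2 !) =
      if n = 1 then x else 0 := by
  rcases lt_or_ge n 2 with hn | hn
  · interval_cases n <;>
      simp [treeCoeff, Nat.sum_antidiagonal_eq_sum_range_succ_mk, sum_range_succ]
  have hterm : ∀ p ∈ antidiagonal n, treeCoeff p.1 * x ^ p.1 * ((p.1 * -x) ^ p.2 / p.2 !) =
      x ^ n * (treeCoeff p.1 * ((-p.1 : ℝ) ^ (n - p.1) / (n - p.1)!)) := by
    rintro ⟨k, j⟩ hkj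
    obtain rfl : n = k + j := (mem_antidiagonal.mp hkj).symm
    rw [Nat.add_sub_cancel_left, mul_neg, ← neg_mul, mul_pow, pow_add]
    ring
  rw [sum_congr rfl hterm, ← mul_sum, Nat.sum_antidiagonal_eq_sum_range_succ_mk,
    sum_congr rfl fun k hk ↦ treeCoeff_mul_neg_pow_div_factorial
      (Nat.lt_succ_iff.mp (mem_range.mp hk)) hn, ← sum_div,
    sum_range_neg_one_pow_mul_choose_mul_pow_eq_zero (by omega), if_neg (by omega)]
  simp

theorem HasSum.sum_antidiagonal {A α : Type*} [AddCommMonoid A] [HasAntidiagonal A]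
    [AddCommMonoid α] [TopologicalSpace α] [ContinuousAdd α] [RegularSpace α]
    {f : A × A → α} {a : α} (h : HasSum f a) :
    HasSum (fun n ↦ ∑ p ∈ antidiagonal n, f p) a :=
  (HasAntidiagonal.sigmaAntidiagonalEquivProd.hasSum_iff.mpr h).sigma fun n ↦ by
    rw [← sum_attach]; exact hasSum_fintype _

theorem hasSum_treeCoeff_mul_pow_of_mul_exp_lt {x : ℝ} (hx₀ : 0 ≤ x)
    (hx : x * exp x < exp (-1)) :
    HasSum (fun k ↦ treeCoeff k * (x * exp (-x)) ^ k) x := by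
  set F : ℕ × ℕ → ℝ := fun p ↦ treeCoeff p.1 * x ^ p.1 * ((p.1 * -x) ^ p.2 / p.2 !)
  have hrow : ∀ (y : ℝ) (k : ℕ), HasSum (fun j ↦ treeCoeff k * x ^ k * ((k * y) ^ j / j !))
      (treeCoeff k * (x * exp y) ^ k) := fun y k ↦ by
    have hexp := NormedSpace.expSeries_div_hasSum_exp (k * y)
    rw [← exp_eq_exp_ℝ] at hexp
    have hterm : treeCoeff k * (x * exp y) ^ k = treeCoeff k * x ^ k * exp (k * y) := by
      rw [mul_pow, ← exp_nat_mul]; ring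
    rw [hterm]
    exact hexp.mul_left _
  have habs : Summable fun p ↦ |F p| := by
    have hF : ∀ p, |F p| = treeCoeff p.1 * x ^ p.1 * ((p.1 * x) ^ p.2 / p.2 !) := fun p ↦ by
      simp only [F, abs_mul, abs_div, abs_pow, abs_neg, Nat.abs_cast, abs_of_nonneg hx₀,
        abs_of_nonneg (treeCoeff_nonneg _)]
    simp only [hF]
    refine (summable_prod_of_nonneg fun p ↦ by have := treeCoeff_nonneg p.1; positivity).mpr
      ⟨fun k ↦ (hrow x k).summable, ?_⟩
    refine (summable_treeCoeff_mul_pow (by positivity) hx).congr fun k ↦ ?_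
    rw [(hrow x k).tsum_eq]
  obtain ⟨a, hF⟩ := habs.of_abs
  have hdiag := hF.sum_antidiagonal
  simp only [F, sum_antidiagonal_treeCoeff_mul_exp_series] at hdiag
  have ha : a = x := hdiag.unique (hasSum_ite_eq 1 x)
  simpa [ha] using hF.prod_fiberwise (hrow (-x))

theorem mul_exp_neg_lt_exp_neg_one {y : ℝ} (hy : y ≠ 1) : y * exp (-y) < exp (-1) := by
  have h : y < exp (y - 1) := by
    simpa using add_one_lt_exp (sub_ne_zero.mpr hy)
  calc y * exp (-y) < exp (y - 1) * exp (-y) := mul_lt_mul_of_pos_right h (exp_pos _)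
    _ = exp (-1) := by rw [← exp_add]; ring_nf

theorem mul_exp_lt_exp_neg_one_of_le {y : ℝ} (hy : y ≤ 1 / 8) :
    y * exp y < exp (-1) := by
  have he : exp 1 < 2.7182818286 := exp_one_lt_d9
  have hy' : exp y ≤ exp 1 := exp_le_exp.mpr (by linarith)
  have key : y * exp y * exp 1 < 1 :=
    calc y * exp y * exp 1 ≤ 1 / 8 * exp 1 * exp 1 := by gcongr
      _ < 1 := by nlinarith [exp_pos 1]
  rwa [← lt_div_iff₀ (exp_pos 1), one_div, ← exp_neg] at key

theorem analyticAt_tsum_mul_pow {𝕜 : Type*} [NontriviallyNormedField 𝕜] [CompleteSpace 𝕜]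
    {c : ℕ → 𝕜} {r : NNReal} {C : ℝ} (hc : ∀ k, ‖c k‖ * (r : ℝ) ^ k ≤ C) {t : 𝕜}
    (ht : ‖t‖ < r) : AnalyticAt 𝕜 (fun t ↦ ∑' k, c k * t ^ k) t := by
  set p := FormalMultilinearSeries.ofScalars 𝕜 c
  have hr : (r : ENNReal) ≤ p.radius :=
    p.le_radius_of_bound C fun k ↦ by simpa [p, FormalMultilinearSeries.ofScalars_norm] using hc k
  have hsum : p.sum = fun t ↦ ∑' k, c k * t ^ k := funext fun t ↦ by
    simp [p, FormalMultilinearSeries.sum, mul_comm]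
  have ht' : edist t 0 < p.radius := by
    rw [edist_zero_right]
    exact (enorm_lt_coe.mpr ht).trans_le hr
  rw [← hsum]
  exact (p.hasFPowerSeriesOnBall (zero_le.trans_lt ht')).analyticAt_of_mem ht'

theorem hasSum_treeCoeff_mul_pow_of_lt_one {x : ℝ} (hx₀ : 0 < x) (hx₁ : x < 1) :
    HasSum (fun k ↦ treeCoeff k * (x * exp (-x)) ^ k) x := by
  have hφ : ∀ y ∈ Set.Ioo (0 : ℝ) 1, 0 ≤ y * exp (-y) ∧ y * exp (-y) < exp (-1) :=
    fun y hy ↦ ⟨by have := hy.1; positivity, mul_exp_neg_lt_exp_neg_one hy.2.ne⟩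
  have hT : AnalyticOnNhd ℝ (fun y ↦ ∑' k, treeCoeff k * (y * exp (-y)) ^ k) (Set.Ioo 0 1) :=
    fun y hy ↦ by
      refine AnalyticAt.comp (g := fun t ↦ ∑' k, treeCoeff k * t ^ k) ?_ (by fun_prop)
      refine analyticAt_tsum_mul_pow (r := ⟨exp (-1), (exp_pos _).le⟩) (C := 1) (fun k ↦ ?_) ?_
      · change ‖treeCoeff k‖ * exp (-1) ^ k ≤ 1
        rw [Real.norm_of_nonneg (treeCoeff_nonneg k), ← exp_nat_mul]
        calc treeCoeff k * exp (k * -1) ≤ exp 1 ^ k * exp (k * -1) := by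
              gcongr; exact treeCoeff_le_exp_one_pow k
          _ = 1 := by rw [← exp_nat_mul, ← exp_add]; simp
      · rw [Real.norm_of_nonneg (hφ y hy).1]
        exact (hφ y hy).2
  have hsmall : (fun y ↦ ∑' k, treeCoeff k * (y * exp (-y)) ^ k) =ᶠ[𝓝 (1 / 16)] id := by
    filter_upwards [Ioo_mem_nhds (by norm_num : (0 : ℝ) < 1 / 16)
      (by norm_num : (1 / 16 : ℝ) < 1 / 8)] with y hy
    exact (hasSum_treeCoeff_mul_pow_of_mul_exp_lt hy.1.le
      (mul_exp_lt_exp_neg_one_of_le hy.2.le)).tsum_eq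
  have heq := hT.eqOn_of_preconnected_of_eventuallyEq analyticOnNhd_id isPreconnected_Ioo
    (by norm_num) hsmall ⟨hx₀, hx₁⟩
  have hsum := summable_treeCoeff_mul_pow (hφ x ⟨hx₀, hx₁⟩).1 (hφ x ⟨hx₀, hx₁⟩).2
  have heq' : ∑' k, treeCoeff k * (x * exp (-x)) ^ k = x := heq
  simpa only [heq'] using hsum.hasSum

theorem hasSum_mul_pow_of_tendsto {a : ℕ → ℝ} (ha : ∀ k, 0 ≤ a k) {ι : Type*} {l : Filter ι}
    [l.NeBot] {u g : ι → ℝ} {r L : ℝ} (hu : Tendsto u l (𝓝 r)) (hg : Tendsto g l (𝓝 L))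
    (hur : ∀ᶠ i in l, 0 ≤ u i ∧ u i ≤ r) (hsum : ∀ᶠ i in l, HasSum (fun k ↦ a k * u i ^ k) (g i)) :
    HasSum (fun k ↦ a k * r ^ k) L := by
  have hr : 0 ≤ r := ge_of_tendsto hu (hur.mono fun _ hi ↦ hi.1)
  have hpartial : ∀ N, ∑ k ∈ range N, a k * r ^ k ≤ L := fun N ↦ by
    refine le_of_tendsto_of_tendsto (tendsto_finsetSum _ fun k _ ↦ (hu.pow k).const_mul (a k)) hg ?_
    filter_upwards [hur, hsum] with i hi hi_sum
    exact sum_le_hasSum _ (fun k _ ↦ mul_nonneg (ha k) (pow_nonneg hi.1 k)) hi_sum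
  have hsummable : Summable fun k ↦ a k * r ^ k :=
    summable_of_sum_range_le (fun k ↦ mul_nonneg (ha k) (pow_nonneg hr k)) hpartial
  have hge : L ≤ ∑' k, a k * r ^ k := by
    refine le_of_tendsto hg ?_
    filter_upwards [hur, hsum] with i hi hi_sum
    exact hasSum_le (fun k ↦ mul_le_mul_of_nonneg_left (pow_le_pow_left₀ hi.1 hi.2 k) (ha k))
      hi_sum hsummable.hasSum
  rw [← le_antisymm (hsummable.tsum_le_of_sum_range_le hpartial) hge]
  exact hsummable.hasSum

theorem hasSum_treeCoeff_mul_pow {x : ℝ} (hx₀ : 0 < x) (hx₁ : x ≤ 1) :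
    HasSum (fun k ↦ treeCoeff k * (x * exp (-x)) ^ k) x := by
  rcases hx₁.lt_or_eq with hx₁ | rfl
  · exact hasSum_treeCoeff_mul_pow_of_lt_one hx₀ hx₁
  have hφ : Continuous fun y : ℝ ↦ y * exp (-y) := by fun_prop
  have hleft : ∀ᶠ y in 𝓝[<] (1 : ℝ), y ∈ Set.Ioo 0 1 := Ioo_mem_nhdsLT (by norm_num)
  refine hasSum_mul_pow_of_tendsto (l := 𝓝[<] 1) treeCoeff_nonneg
    ((hφ.tendsto 1).mono_left nhdsWithin_le_nhds) (tendsto_nhdsWithin_of_tendsto_nhds tendsto_id)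
    ?_ ?_
  · filter_upwards [hleft] with y hy
    exact ⟨by have := hy.1; positivity, by simpa using (mul_exp_neg_lt_exp_neg_one hy.2.ne).le⟩
  · filter_upwards [hleft] with y hy
    exact hasSum_treeCoeff_mul_pow_of_lt_one hy.1 hy.2

theorem hasSum_succ_pow_div_factorial_mul_pow {x : ℝ} (hx₀ : 0 < x) (hx₁ : x ≤ 1) :
    HasSum (fun k : ℕ ↦ ((k + 1 : ℝ) ^ k / (k + 1)!) * (x * exp (-x)) ^ (k + 1)) x := by
  simpa [treeCoeff_succ, show treeCoeff 0 = 0 from if_pos rfl] using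
    (hasSum_nat_add_iff' 1).mpr (hasSum_treeCoeff_mul_pow hx₀ hx₁)

theorem fAlpha_eq_tsum_div {α : ℝ} (hα : α ≠ 0) :
    fAlpha α = (∑' k : ℕ, ((k + 1 : ℝ) ^ k / (k + 1)!) * (α * exp (-α)) ^ (k + 1)) / α := by
  rw [fAlpha, ← tsum_div_const]
  refine tsum_congr fun k ↦ ?_
  rw [mul_pow, ← exp_nat_mul]
  field_simp
  push_cast
  ring_nf

theorem stmt16 :
    (∀ α : ℝ, 0 < α → α ≤ 1 → fAlpha α = 1) ∧
    (∀ α αbar : ℝ, 1 < α → 0 < αbar → αbar < 1 →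
      αbar * Real.exp (-αbar) = α * Real.exp (-α) → fAlpha α = αbar / α) ∧
    (∀ x : ℝ, 0 < x → x ≤ 1 →
      ∑' k : ℕ, ((k + 1 : ℝ) ^ k / Nat.factorial (k + 1)) *
        (x * Real.exp (-x)) ^ (k + 1) = x) := by
  refine ⟨fun α hα₀ hα₁ ↦ ?_, fun α αbar hα hαbar₀ hαbar₁ hφ ↦ ?_,
    fun x hx₀ hx₁ ↦ (hasSum_succ_pow_div_factorial_mul_pow hx₀ hx₁).tsum_eq⟩
  · rw [fAlpha_eq_tsum_div hα₀.ne', (hasSum_succ_pow_div_factorial_mul_pow hα₀ hα₁).tsum_eq,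
      div_self hα₀.ne']
  · rw [fAlpha_eq_tsum_div (zero_lt_one.trans hα).ne', ← hφ,
      (hasSum_succ_pow_div_factorial_mul_pow hαbar₀ hαbar₁.le).tsum_eq]
end
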